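/- arXiv:2312.14964 — 5 statements merged into one kernel-verified Lean document; each statement's English description precedes it below -/
import Mathlib

section
/- Let T be a bistrong graded monad on a monoidal category C, let f : A ⟶ A' be a morphism of C with pure Kleisli 1-cell f̃, and let (e, g) : B ⇝ B' be a Kleisli 1-cell. Writing ; for Kleisli composition, the composite (f̃ ⋉ B) ; (A' ⋊ (e, g)) : A ⊗ B ⇝ A' ⊗ B' (of grade 𝟙 ⊗ e) and the composite (A ⋊ (e, g)) ; (f̃ ⋉ B') (of grade e ⊗ 𝟙) agree after regrading along the unitors of E: [underlying morphism of (f̃ ⋉ B) ; (A' ⋊ (e, g))] ≫ (T.map ((λ_e).hom)).app (A' ⊗ B') = [underlying morphism of (A ⋊ (e, g)) ; (f̃ ⋉ B')] ≫ (T.map ((ρ_e).hom)).app (A' ⊗ B'). (Pure 1-cells are left-central in the Kleisli bicategory of a bistrong graded monad.) -/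
open CategoryTheory Category MonoidalCategory

universe v₁ v₂ u₁ u₂

/-- A graded monad on a category `C` with grades in a monoidal category `E`:
a lax monoidal functor `T : E ⥤ (C ⥤ C)` where `C ⥤ C` is monoidal under composition,
so that `μ e e' : T_e ∘ T_{e'} ⟶ T_{e ⊗ e'}` with `(T_e ∘ T_{e'}) X = T_e (T_{e'} X)`. -/
structure GradedMonad (E : Type u₁) [Category.{v₁} E] [MonoidalCategory E]
    (C : Type u₂) [Category.{v₂} C] where
  T : E ⥤ C ⥤ C
  ε : 𝟭 C ⟶ T.obj (𝟙_ E)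
  μ : ∀ e e' : E, (T.obj e' ⋙ T.obj e) ⟶ T.obj (e ⊗ e')
  μ_natural : ∀ {e d e' d' : E} (γ : e ⟶ d) (δ : e' ⟶ d') (X : C),
    (T.map γ).app ((T.obj e').obj X) ≫ (T.obj d).map ((T.map δ).app X) ≫ (μ d d').app X =
      (μ e e').app X ≫ (T.map (γ ⊗ₘ δ)).app X
  left_unit : ∀ (e : E) (X : C),
    ε.app ((T.obj e).obj X) ≫ (μ (𝟙_ E) e).app X = (T.map (λ_ e).inv).app X
  right_unit : ∀ (e : E) (X : C),
    (T.obj e).map (ε.app X) ≫ (μ e (𝟙_ E)).app X = (T.map (ρ_ e).inv).app X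
  assoc : ∀ (e e' e'' : E) (X : C),
    (μ e e').app ((T.obj e'').obj X) ≫ (μ (e ⊗ e') e'').app X ≫
        (T.map (α_ e e' e'').hom).app X =
      (T.obj e).map ((μ e' e'').app X) ≫ (μ e (e' ⊗ e'')).app X

/-- A bistrong graded monad on a monoidal category `C`: a graded monad equipped with a
left strength `t` and a right strength `s`, natural in both objects and in the grade,
compatible with the unit `ε` and multiplication `μ` of the graded monad. -/
structure BistrongGradedMonad (E : Type u₁) [Category.{v₁} E] [MonoidalCategory E]
    (C : Type u₂) [Category.{v₂} C] [MonoidalCategory C] extends GradedMonad E C where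
  t : ∀ (e : E) (A B : C), A ⊗ (T.obj e).obj B ⟶ (T.obj e).obj (A ⊗ B)
  s : ∀ (e : E) (A B : C), (T.obj e).obj A ⊗ B ⟶ (T.obj e).obj (A ⊗ B)
  t_natural_left : ∀ (e : E) {A A' : C} (u : A ⟶ A') (B : C),
    (u ▷ (T.obj e).obj B) ≫ t e A' B = t e A B ≫ (T.obj e).map (u ▷ B)
  t_natural_right : ∀ (e : E) (A : C) {B B' : C} (v : B ⟶ B'),
    (A ◁ (T.obj e).map v) ≫ t e A B' = t e A B ≫ (T.obj e).map (A ◁ v)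
  t_natural_grade : ∀ {e e' : E} (γ : e ⟶ e') (A B : C),
    (A ◁ (T.map γ).app B) ≫ t e' A B = t e A B ≫ (T.map γ).app (A ⊗ B)
  s_natural_left : ∀ (e : E) {A A' : C} (u : A ⟶ A') (B : C),
    ((T.obj e).map u ▷ B) ≫ s e A' B = s e A B ≫ (T.obj e).map (u ▷ B)
  s_natural_right : ∀ (e : E) (A : C) {B B' : C} (v : B ⟶ B'),
    ((T.obj e).obj A ◁ v) ≫ s e A B' = s e A B ≫ (T.obj e).map (A ◁ v)
  s_natural_grade : ∀ {e e' : E} (γ : e ⟶ e') (A B : C),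
    ((T.map γ).app A ▷ B) ≫ s e' A B = s e A B ≫ (T.map γ).app (A ⊗ B)
  t_unit : ∀ A B : C, (A ◁ ε.app B) ≫ t (𝟙_ E) A B = ε.app (A ⊗ B)
  s_unit : ∀ A B : C, (ε.app A ▷ B) ≫ s (𝟙_ E) A B = ε.app (A ⊗ B)
  t_mul : ∀ (e e' : E) (A B : C),
    (A ◁ (μ e e').app B) ≫ t (e ⊗ e') A B =
      t e A ((T.obj e').obj B) ≫ (T.obj e).map (t e' A B) ≫ (μ e e').app (A ⊗ B)
  s_mul : ∀ (e e' : E) (A B : C),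
    ((μ e e').app A ▷ B) ≫ s (e ⊗ e') A B =
      s e ((T.obj e').obj A) B ≫ (T.obj e).map (s e' A B) ≫ (μ e e').app (A ⊗ B)

/-!
Whiskering a pure cell by the right strength gives a pure cell again (`s_unit`), and pure cells
are units for Kleisli composition up to the unitors of `E` (`left_unit`, `right_unit`). So both
composites collapse to plain morphisms, `(f ▷ B) ≫ (A' ◁ g) ≫ t` and
`(A ◁ g) ≫ t ≫ T_e (f ▷ B')`, which agree by the interchange law and naturality of `t`.
-/

namespace GradedMonad

variable {E : Type u₁} [Category.{v₁} E] [MonoidalCategory E] {C : Type u₂} [Category.{v₂} C]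
  (M : GradedMonad E C)

theorem pure_kleisliComp {e : E} {X Y : C} (h : X ⟶ (M.T.obj e).obj Y) :
    M.ε.app X ≫ (M.T.obj (𝟙_ E)).map h ≫ (M.μ (𝟙_ E) e).app Y ≫
      (M.T.map (λ_ e).hom).app Y = h := by
  rw [← M.ε.naturality_assoc, Functor.id_map, reassoc_of% M.left_unit e Y,
    Iso.map_inv_hom_id_app]
  exact comp_id h

theorem kleisliComp_pure {e : E} {X Y : C} (u : X ⟶ Y) :
    (M.T.obj e).map (u ≫ M.ε.app Y) ≫ (M.μ e (𝟙_ E)).app Y ≫ (M.T.map (ρ_ e).hom).app Y =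
      (M.T.obj e).map u := by
  rw [Functor.map_comp_assoc, reassoc_of% M.right_unit e Y, Iso.map_inv_hom_id_app, comp_id]

end GradedMonad

theorem BistrongGradedMonad.pure_whiskerRight {E : Type u₁} [Category.{v₁} E]
    [MonoidalCategory E] {C : Type u₂} [Category.{v₂} C] [MonoidalCategory C]
    (M : BistrongGradedMonad E C) {A A' : C} (f : A ⟶ A') (B : C) :
    ((f ≫ M.ε.app A') ▷ B) ≫ M.s (𝟙_ E) A' B = (f ▷ B) ≫ M.ε.app (A' ⊗ B) := by
  rw [comp_whiskerRight, assoc, M.s_unit]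

/-- Pure 1-cells are left-central in the Kleisli bicategory of a bistrong graded monad:
for a pure 1-cell `f̃` and any Kleisli 1-cell `(e, g)`, the two whiskered composites
`(f̃ ⋉ B) ; (A' ⋊ (e, g))` and `(A ⋊ (e, g)) ; (f̃ ⋉ B')` agree after regrading along
the unitors of `E`. -/
theorem BistrongGradedMonad.pure_left_central {E : Type u₁} [Category.{v₁} E]
    [MonoidalCategory E] {C : Type u₂} [Category.{v₂} C] [MonoidalCategory C]
    (M : BistrongGradedMonad E C)
    {A A' B B' : C} {e : E} (f : A ⟶ A') (g : B ⟶ (M.T.obj e).obj B') :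
    (((f ≫ M.ε.app A') ▷ B) ≫ M.s (𝟙_ E) A' B) ≫
        (M.T.obj (𝟙_ E)).map ((A' ◁ g) ≫ M.t e A' B') ≫
        (M.μ (𝟙_ E) e).app (A' ⊗ B') ≫ (M.T.map (λ_ e).hom).app (A' ⊗ B') =
      ((A ◁ g) ≫ M.t e A B') ≫
        (M.T.obj e).map (((f ≫ M.ε.app A') ▷ B') ≫ M.s (𝟙_ E) A' B') ≫
        (M.μ e (𝟙_ E)).app (A' ⊗ B') ≫ (M.T.map (ρ_ e).hom).app (A' ⊗ B') := by
  rw [M.pure_whiskerRight, M.pure_whiskerRight, assoc, M.pure_kleisliComp, assoc,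
    M.kleisliComp_pure, ← M.t_natural_left, whisker_exchange_assoc]
end

section
/- Let T be a bistrong graded monad on a monoidal category C, let g : B ⟶ B' be a morphism of C with pure Kleisli 1-cell g̃, and let (e, f) : A ⇝ A' be a Kleisli 1-cell. Writing ; for Kleisli composition, [underlying morphism of (B ⋊ (e, f)) ; (g̃ ⋉ A')] ≫ (T.map ((ρ_e).hom)).app (B' ⊗ A') = [underlying morphism of (g̃ ⋉ A) ; (B' ⋊ (e, f))] ≫ (T.map ((λ_e).hom)).app (B' ⊗ A'). (Pure 1-cells are right-central in the Kleisli bicategory of a bistrong graded monad.) -/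
open CategoryTheory Category MonoidalCategory

universe v₁ v₂ u₁ u₂

namespace GradedMonad

variable {E : Type u₁} [Category.{v₁} E] [MonoidalCategory E]
  {C : Type u₂} [Category.{v₂} C] (M : GradedMonad E C)

def kleisliComp {X Y Z : C} {e e' : E}
    (f : X ⟶ (M.T.obj e).obj Y) (g : Y ⟶ (M.T.obj e').obj Z) :
    X ⟶ (M.T.obj (e ⊗ e')).obj Z :=
  f ≫ (M.T.obj e).map g ≫ (M.μ e e').app Z

def pure {X Y : C} (u : X ⟶ Y) : X ⟶ (M.T.obj (𝟙_ E)).obj Y :=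
  u ≫ M.ε.app Y

theorem kleisliComp_pure_right {X Y Z : C} {e : E} (f : X ⟶ (M.T.obj e).obj Y) (u : Y ⟶ Z) :
    M.kleisliComp f (M.pure u) ≫ (M.T.map (ρ_ e).hom).app Z = f ≫ (M.T.obj e).map u := by
  simp only [kleisliComp, pure, Functor.map_comp, Category.assoc]
  rw [reassoc_of% M.right_unit,
    ← NatTrans.comp_app, ← M.T.map_comp, Iso.inv_hom_id, M.T.map_id, NatTrans.id_app, comp_id]

theorem kleisliComp_pure_left {X Y Z : C} {e : E} (u : X ⟶ Y) (g : Y ⟶ (M.T.obj e).obj Z) :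
    M.kleisliComp (M.pure u) g ≫ (M.T.map (λ_ e).hom).app Z = u ≫ g := by
  simp only [kleisliComp, pure, Category.assoc]
  rw [← M.ε.naturality_assoc, Functor.id_map,
    reassoc_of% M.left_unit, ← NatTrans.comp_app, ← M.T.map_comp, Iso.inv_hom_id, M.T.map_id,
    NatTrans.id_app]
  exact u ≫= comp_id g

end GradedMonad

namespace BistrongGradedMonad

variable {E : Type u₁} [Category.{v₁} E] [MonoidalCategory E]
  {C : Type u₂} [Category.{v₂} C] [MonoidalCategory C] (M : BistrongGradedMonad E C)

theorem pure_whiskerRight_comp_s {X Y : C} (u : X ⟶ Y) (A : C) :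
    (M.pure u ▷ A) ≫ M.s (𝟙_ E) Y A = M.pure (u ▷ A) := by
  rw [GradedMonad.pure, GradedMonad.pure, comp_whiskerRight, assoc, M.s_unit]

end BistrongGradedMonad

/-- Pure 1-cells are right-central in the Kleisli bicategory of a bistrong graded monad:
for a pure 1-cell `g̃` and any Kleisli 1-cell `(e, f)`, the two whiskered composites
`(B ⋊ (e, f)) ; (g̃ ⋉ A')` and `(g̃ ⋉ A) ; (B' ⋊ (e, f))` agree after regrading along
the unitors of `E`. -/
theorem BistrongGradedMonad.pure_right_central {E : Type u₁} [Category.{v₁} E]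
    [MonoidalCategory E] {C : Type u₂} [Category.{v₂} C] [MonoidalCategory C]
    (M : BistrongGradedMonad E C)
    {A A' B B' : C} {e : E} (g : B ⟶ B') (f : A ⟶ (M.T.obj e).obj A') :
    ((B ◁ f) ≫ M.t e B A') ≫
        (M.T.obj e).map (((g ≫ M.ε.app B') ▷ A') ≫ M.s (𝟙_ E) B' A') ≫
        (M.μ e (𝟙_ E)).app (B' ⊗ A') ≫ (M.T.map (ρ_ e).hom).app (B' ⊗ A') =
      (((g ≫ M.ε.app B') ▷ A) ≫ M.s (𝟙_ E) B' A) ≫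
        (M.T.obj (𝟙_ E)).map ((B' ◁ f) ≫ M.t e B' A') ≫
        (M.μ (𝟙_ E) e).app (B' ⊗ A') ≫ (M.T.map (λ_ e).hom).app (B' ⊗ A') := by
  calc _ = M.kleisliComp ((B ◁ f) ≫ M.t e B A') ((M.pure g ▷ A') ≫ M.s (𝟙_ E) B' A') ≫
          (M.T.map (ρ_ e).hom).app (B' ⊗ A') := by
        simp only [GradedMonad.kleisliComp, GradedMonad.pure, assoc]
    _ = (B ◁ f) ≫ M.t e B A' ≫ (M.T.obj e).map (g ▷ A') := by
        rw [pure_whiskerRight_comp_s, GradedMonad.kleisliComp_pure_right, assoc]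
    _ = (g ▷ A) ≫ (B' ◁ f) ≫ M.t e B' A' := by
        rw [← M.t_natural_left, whisker_exchange_assoc]
    _ = M.kleisliComp ((M.pure g ▷ A) ≫ M.s (𝟙_ E) B' A) ((B' ◁ f) ≫ M.t e B' A') ≫
          (M.T.map (λ_ e).hom).app (B' ⊗ A') := by
        rw [pure_whiskerRight_comp_s, GradedMonad.kleisliComp_pure_left]
    _ = _ := by
        simp only [GradedMonad.kleisliComp, GradedMonad.pure, assoc]
end

section
/- Let T be a bistrong graded monad on a monoidal category C and let B be an object of C. Then right whiskering by B strictly preserves Kleisli composition: for Kleisli 1-cells (e, f) : A ⇝ A' and (e', f') : A' ⇝ A'', ((e, f) ; (e', f')) ⋉ B = ((e, f) ⋉ B) ; ((e', f') ⋉ B); explicitly, ((f ≫ (T_e).map f' ≫ (μ_{e,e'}).app A'') ▷ B) ≫ s^{e⊗e'}_{A'',B} = ((f ▷ B) ≫ s^e_{A',B}) ≫ (T_e).map ((f' ▷ B) ≫ s^{e'}_{A'',B}) ≫ (μ_{e,e'}).app (A'' ⊗ B). -/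
open CategoryTheory Category MonoidalCategory

universe v₁ v₂ u₁ u₂

namespace BistrongGradedMonad

variable {E : Type u₁} [Category.{v₁} E] [MonoidalCategory E]
  {C : Type u₂} [Category.{v₂} C] [MonoidalCategory C] (M : BistrongGradedMonad E C)

lemma map_comp_μ_whiskerRight_comp_s (B : C) {A' A'' : C} {e e' : E}
    (f' : A' ⟶ (M.T.obj e').obj A'') :
    (((M.T.obj e).map f' ≫ (M.μ e e').app A'') ▷ B) ≫ M.s (e ⊗ e') A'' B =
      M.s e A' B ≫ (M.T.obj e).map ((f' ▷ B) ≫ M.s e' A'' B) ≫ (M.μ e e').app (A'' ⊗ B) :=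
  calc (((M.T.obj e).map f' ≫ (M.μ e e').app A'') ▷ B) ≫ M.s (e ⊗ e') A'' B
      = ((M.T.obj e).map f' ▷ B) ≫ M.s e ((M.T.obj e').obj A'') B ≫
          (M.T.obj e).map (M.s e' A'' B) ≫ (M.μ e e').app (A'' ⊗ B) := by
        rw [comp_whiskerRight, assoc, M.s_mul]
    _ = M.s e A' B ≫ (M.T.obj e).map (f' ▷ B) ≫
          (M.T.obj e).map (M.s e' A'' B) ≫ (M.μ e e').app (A'' ⊗ B) := by
        rw [reassoc_of% M.s_natural_left e f' B]
    _ = M.s e A' B ≫ (M.T.obj e).map ((f' ▷ B) ≫ M.s e' A'' B) ≫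
          (M.μ e e').app (A'' ⊗ B) := by
        rw [Functor.map_comp_assoc]

end BistrongGradedMonad

/-- Right whiskering by an object `B` strictly preserves Kleisli composition:
`((e, f) ; (e', f')) ⋉ B = ((e, f) ⋉ B) ; ((e', f') ⋉ B)`. -/
theorem BistrongGradedMonad.whiskerRight_kleisliComp {E : Type u₁} [Category.{v₁} E]
    [MonoidalCategory E] {C : Type u₂} [Category.{v₂} C] [MonoidalCategory C]
    (M : BistrongGradedMonad E C)
    (B : C) {A A' A'' : C} {e e' : E}
    (f : A ⟶ (M.T.obj e).obj A') (f' : A' ⟶ (M.T.obj e').obj A'') :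
    ((f ≫ (M.T.obj e).map f' ≫ (M.μ e e').app A'') ▷ B) ≫ M.s (e ⊗ e') A'' B =
      ((f ▷ B) ≫ M.s e A' B) ≫
        (M.T.obj e).map ((f' ▷ B) ≫ M.s e' A'' B) ≫ (M.μ e e').app (A'' ⊗ B) := by
  rw [comp_whiskerRight, assoc, M.map_comp_μ_whiskerRight_comp_s, assoc]
end

section
/- Let (T, η, μ) be a monad on a monoidal category C with a unit-compatible bistrength (t, s). Then pure morphisms are central in the Kleisli category: for every f : A ⟶ A' in C and every Kleisli morphism g : B ⟶ T B', (((f ≫ η.app A') ▷ B) ≫ s_{A',B}) ≫Kl ((A' ◁ g) ≫ t_{A',B'}) = ((A ◁ g) ≫ t_{A,B'}) ≫Kl (((f ≫ η.app A') ▷ B') ≫ s_{A',B'}), as morphisms A ⊗ B ⟶ T (A' ⊗ B'). -/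
open CategoryTheory Category MonoidalCategory

universe v u

/-- A unit-compatible bistrength for a monad `T` on a monoidal category: a left strength
`t` and a right strength `s`, natural in both arguments, each compatible with the unit
`η` of the monad. -/
structure UnitBistrength {C : Type u} [Category.{v} C] [MonoidalCategory C]
    (T : Monad C) where
  t : ∀ A B : C, A ⊗ T.obj B ⟶ T.obj (A ⊗ B)
  s : ∀ A B : C, T.obj A ⊗ B ⟶ T.obj (A ⊗ B)
  t_natural_left : ∀ {A A' : C} (u : A ⟶ A') (B : C),
    (u ▷ T.obj B) ≫ t A' B = t A B ≫ T.map (u ▷ B)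
  t_natural_right : ∀ (A : C) {B B' : C} (v : B ⟶ B'),
    (A ◁ T.map v) ≫ t A B' = t A B ≫ T.map (A ◁ v)
  s_natural_left : ∀ {A A' : C} (u : A ⟶ A') (B : C),
    (T.map u ▷ B) ≫ s A' B = s A B ≫ T.map (u ▷ B)
  s_natural_right : ∀ (A : C) {B B' : C} (v : B ⟶ B'),
    (T.obj A ◁ v) ≫ s A B' = s A B ≫ T.map (A ◁ v)
  t_unit : ∀ A B : C, (A ◁ T.η.app B) ≫ t A B = T.η.app (A ⊗ B)
  s_unit : ∀ A B : C, (T.η.app A ▷ B) ≫ s A B = T.η.app (A ⊗ B)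

/-- Kleisli composition for a monad. -/
def klComp {C : Type u} [Category.{v} C] (T : Monad C) {X Y Z : C}
    (f : X ⟶ T.obj Y) (g : Y ⟶ T.obj Z) : X ⟶ T.obj Z :=
  f ≫ T.map g ≫ T.μ.app Z

/-- Pure morphisms are central in the Kleisli category of a monad with a unit-compatible
bistrength. -/
theorem UnitBistrength.pure_central {C : Type u} [Category.{v} C] [MonoidalCategory C]
    {T : Monad C} (St : UnitBistrength T)
    {A A' B B' : C} (f : A ⟶ A') (g : B ⟶ T.obj B') :
    klComp T (((f ≫ T.η.app A') ▷ B) ≫ St.s A' B) ((A' ◁ g) ≫ St.t A' B') =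
      klComp T ((A ◁ g) ≫ St.t A B') (((f ≫ T.η.app A') ▷ B') ≫ St.s A' B') := by
  have lhs_eq : klComp T (((f ≫ T.η.app A') ▷ B) ≫ St.s A' B) ((A' ◁ g) ≫ St.t A' B')
      = (f ▷ B) ≫ (A' ◁ g) ≫ St.t A' B' := by
    simp only [klComp, comp_whiskerRight, assoc]
    slice_lhs 2 3 => rw [St.s_unit]
    slice_lhs 2 3 => rw [← T.η.naturality]
    simp
  have rhs_eq : klComp T ((A ◁ g) ≫ St.t A B') (((f ≫ T.η.app A') ▷ B') ≫ St.s A' B')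
      = (A ◁ g) ≫ (f ▷ T.obj B') ≫ St.t A' B' := by
    simp only [klComp, comp_whiskerRight, assoc, Functor.map_comp]
    slice_lhs 4 5 => rw [← T.map_comp, St.s_unit]
    slice_lhs 4 5 => rw [T.right_unit]
    slice_lhs 2 3 => rw [← St.t_natural_left]
    simp
  rw [lhs_eq, rhs_eq, ← whisker_exchange_assoc]
end

section
/- Let C be a symmetric monoidal category with braiding β and S an object of C. For every f₀ : A ⟶ A' in C and every g : S ⊗ B ⟶ S ⊗ B', the state-passing morphism S ◁ f₀ : S ⊗ A ⟶ S ⊗ A' is central for the state-passing whiskerings: ((S ◁ f₀) ⋉ B) ≫ (A' ⋊ g) = (A ⋊ g) ≫ ((S ◁ f₀) ⋉ B'), as morphisms S ⊗ (A ⊗ B) ⟶ S ⊗ (A' ⊗ B'). -/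
open CategoryTheory Category MonoidalCategory

universe v u

variable {C : Type u} [Category.{v} C] [MonoidalCategory C] [SymmetricCategory C]

/-- Right whiskering in the state-passing category: for `f : S ⊗ A ⟶ S ⊗ A'`,
`f ⋉ B := α⁻¹ ≫ (f ▷ B) ≫ α`. -/
def stateLtimes (S : C) {A A' : C} (f : S ⊗ A ⟶ S ⊗ A') (B : C) :
    S ⊗ (A ⊗ B) ⟶ S ⊗ (A' ⊗ B) :=
  (α_ S A B).inv ≫ (f ▷ B) ≫ (α_ S A' B).hom

/-- The structural isomorphism `e_{A,B} : S ⊗ (A ⊗ B) ≅ A ⊗ (S ⊗ B)` built from the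
associator and the braiding. -/
def stateExch (S A B : C) : S ⊗ (A ⊗ B) ≅ A ⊗ (S ⊗ B) where
  hom := (α_ S A B).inv ≫ ((β_ S A).hom ▷ B) ≫ (α_ A S B).hom
  inv := (α_ A S B).inv ≫ ((β_ S A).inv ▷ B) ≫ (α_ S A B).hom

/-- Left whiskering in the state-passing category: for `g : S ⊗ B ⟶ S ⊗ B'`,
`A ⋊ g := e.hom ≫ (A ◁ g) ≫ e.inv`. -/
def stateRtimes (S : C) (A : C) {B B' : C} (g : S ⊗ B ⟶ S ⊗ B') :
    S ⊗ (A ⊗ B) ⟶ S ⊗ (A ⊗ B') :=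
  (stateExch S A B).hom ≫ (A ◁ g) ≫ (stateExch S A B').inv

/-- State-passing morphisms of the form `S ◁ f₀` are central for the state-passing
whiskerings. -/
theorem statePassing_whiskerLeft_central (S : C) {A A' B B' : C}
    (f₀ : A ⟶ A') (g : S ⊗ B ⟶ S ⊗ B') :
    stateLtimes S (S ◁ f₀) B ≫ stateRtimes S A' g =
      stateRtimes S A g ≫ stateLtimes S (S ◁ f₀) B' := by
  simp only [stateLtimes, stateRtimes, stateExch]
  simp only [Category.assoc, Iso.hom_inv_id_assoc, Iso.inv_hom_id_assoc]
  rw [← comp_whiskerRight_assoc, BraidedCategory.braiding_naturality_right,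
    comp_whiskerRight_assoc, associator_naturality_left_assoc,
    ← whisker_exchange_assoc, associator_inv_naturality_left_assoc,
    ← comp_whiskerRight_assoc, BraidedCategory.braiding_inv_naturality_left, comp_whiskerRight_assoc]
end
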